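/- Let X be a finitely generated free abelian group and Γ a commutative group. Then every symmetric bilinear map σ : X × X → Γ is of the form σ(x,y) = α(x+y)·α(x)⁻¹·α(y)⁻¹ for some function α : X → Γ; i.e. the group Σ (symmetric bilinear maps modulo the σ_α) is trivial. Explicitly, choosing a basis e₁,…,eₙ one may take α(Σnᵢeᵢ) = ∏ᵢ σ(eᵢ,eᵢ)^{nᵢ(nᵢ−1)/2} · ∏_{i<j} σ(eᵢ,e_j)^{nᵢn_j}. -/

import Mathlib

/-!
Expanding σ bilinearly in the standard basis gives σ(x,y) = ∏_{i,j} gᵢⱼ^{xᵢy_j} with gᵢⱼ = σ(eᵢ,e_j).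
By symmetry of g this is ∏ᵢ gᵢᵢ^{xᵢyᵢ} · ∏_{i<j} gᵢⱼ^{xᵢy_j + x_jyᵢ}. The map α ↦ σ_α is a
homomorphism, so it suffices that each factor is σ_α of the matching factor of α: for gᵢⱼ^{xᵢx_j}
this is the expansion of (x+y)ᵢ(x+y)_j, and for gᵢᵢ^{xᵢ(xᵢ-1)/2} it is the identity
(a+b)(a+b-1)/2 = a(a-1)/2 + b(b-1)/2 + ab.
-/

open Finset

theorem Int.add_mul_add_sub_one_ediv_two (a b : ℤ) :
    (a + b) * (a + b - 1) / 2 = a * (a - 1) / 2 + b * (b - 1) / 2 + a * b := by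
  obtain ⟨k, hk⟩ := Int.even_mul_pred_self a
  obtain ⟨l, hl⟩ := Int.even_mul_pred_self b
  have hab : (a + b) * (a + b - 1) = 2 * (k + l + a * b) := by linear_combination hk + hl
  rw [hab, hk, hl, ← two_mul, ← two_mul]
  simp only [Int.mul_ediv_cancel_left _ two_ne_zero]

theorem Finset.prod_prod_eq_prod_diag_mul_prod_prod_Ioi {ι M : Type*} [LinearOrder ι] [Fintype ι]
    [LocallyFiniteOrderTop ι] [LocallyFiniteOrderBot ι] [CommMonoid M] (f : ι → ι → M) :
    ∏ i, ∏ j, f i j = (∏ i, f i i) * ∏ i, ∏ j ∈ Ioi i, f i j * f j i := by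
  rw [prod_prod_Ioi_mul_eq_prod_prod_off_diag (fun i j => f j i), ← prod_mul_distrib]
  exact prod_congr rfl fun i _ => Fintype.prod_eq_mul_prod_compl i (f i)

theorem eq_prod_zpow_single_of_map_add {ι Γ : Type*} [Fintype ι] [DecidableEq ι] [CommGroup Γ]
    (φ : (ι → ℤ) → Γ) (hφ : ∀ x y, φ (x + y) = φ x * φ y) (x : ι → ℤ) :
    φ x = ∏ i, φ (Pi.single i 1) ^ x i := by
  let F : (ι → ℤ) →+ Additive Γ := AddMonoidHom.mk' (fun x => Additive.ofMul (φ x)) hφ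
  have hF : F x = ∑ i, x i • F (Pi.single i 1) := by
    conv_lhs => rw [← univ_sum_single x]
    simp only [map_sum, ← map_zsmul, ← Pi.single_smul', smul_eq_mul, mul_one]
  exact congrArg Additive.toMul hF

theorem eq_prod_prod_zpow_of_bilinear {ι Γ : Type*} [Fintype ι] [DecidableEq ι] [CommGroup Γ]
    (σ : (ι → ℤ) → (ι → ℤ) → Γ) (hadd_left : ∀ x x' y, σ (x + x') y = σ x y * σ x' y)
    (hadd_right : ∀ x y y', σ x (y + y') = σ x y * σ x y') (x y : ι → ℤ) :
    σ x y = ∏ i, ∏ j, σ (Pi.single i 1) (Pi.single j 1) ^ (x i * y j) := by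
  rw [eq_prod_zpow_single_of_map_add (σ · y) (hadd_left · · y)]
  refine prod_congr rfl fun i _ => ?_
  rw [eq_prod_zpow_single_of_map_add _ (hadd_right (Pi.single i 1)), ← prod_zpow]
  simp only [← zpow_mul, mul_comm]

section Coboundary

variable {X Γ : Type*} [CommGroup Γ]

/-- The paper's `σ_α`, as a function of `α`. -/
def coboundary [Add X] : (X → Γ) →* (X → X → Γ) where
  toFun α x y := α (x + y) * (α x)⁻¹ * (α y)⁻¹
  map_one' := by ext; simp
  map_mul' α β := by
    ext x y
    simp only [Pi.mul_apply, mul_inv]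
    ac_rfl

theorem coboundary_apply [Add X] (α : X → Γ) (x y : X) :
    coboundary α x y = α (x + y) * (α x)⁻¹ * (α y)⁻¹ :=
  rfl

variable [AddZeroClass X]

theorem coboundary_zpow_mul (g : Γ) (f h : X →+ ℤ) (x y : X) :
    coboundary (fun z => g ^ (f z * h z)) x y = g ^ (f x * h y + h x * f y) := by
  simp only [coboundary_apply, map_add, ← zpow_neg, ← zpow_add]
  congr 1
  ring

theorem coboundary_zpow_mul_sub_one_ediv_two (g : Γ) (f : X →+ ℤ) (x y : X) :
    coboundary (fun z => g ^ (f z * (f z - 1) / 2)) x y = g ^ (f x * f y) := by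
  simp only [coboundary_apply, map_add, Int.add_mul_add_sub_one_ediv_two, ← zpow_neg, ← zpow_add]
  congr 1
  ring

end Coboundary

/-- Over a finitely generated free abelian group X = ℤⁿ, every
symmetric bilinear σ : X × X → Γ is of the form σ_α, with the explicit
α(Σnᵢeᵢ) = ∏ᵢ σ(eᵢ,eᵢ)^{nᵢ(nᵢ-1)/2} · ∏_{i<j} σ(eᵢ,e_j)^{nᵢn_j}. -/
theorem stmt_13 {n : ℕ} {Γ : Type*} [CommGroup Γ]
    (σ : (Fin n → ℤ) → (Fin n → ℤ) → Γ)
    (hbil : ∀ x x' y, σ (x + x') y = σ x y * σ x' y)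
    (hsym : ∀ x y, σ x y = σ y x)
    (e : Fin n → (Fin n → ℤ)) (he : ∀ i, e i = Pi.single i 1)
    (α : (Fin n → ℤ) → Γ)
    (hα : ∀ x, α x =
      (∏ i : Fin n, (σ (e i) (e i)) ^ ((x i * (x i - 1)) / 2)) *
        ∏ i : Fin n, ∏ j ∈ Finset.Ioi i, (σ (e i) (e j)) ^ (x i * x j)) :
    ∀ x y, σ x y = α (x + y) * (α x)⁻¹ * (α y)⁻¹ := by
  have hadd_right x y y' : σ x (y + y') = σ x y * σ x y' := by
    simp only [hsym x, hbil]
  let coord (i : Fin n) : (Fin n → ℤ) →+ ℤ := Pi.evalAddMonoidHom (fun _ => ℤ) i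
  have hα' : α = (∏ i, fun z => σ (e i) (e i) ^ (coord i z * (coord i z - 1) / 2)) *
      ∏ i, ∏ j ∈ Ioi i, fun z => σ (e i) (e j) ^ (coord i z * coord j z) := by
    funext z
    simp only [hα, Pi.mul_apply, prod_apply]
    rfl
  intro x y
  calc σ x y = ∏ i, ∏ j, σ (e i) (e j) ^ (x i * y j) := by
        simp only [he]
        exact eq_prod_prod_zpow_of_bilinear σ hbil hadd_right x y
    _ = (∏ i, σ (e i) (e i) ^ (x i * y i)) *
          ∏ i, ∏ j ∈ Ioi i, σ (e i) (e j) ^ (x i * y j + x j * y i) := by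
        rw [prod_prod_eq_prod_diag_mul_prod_prod_Ioi]
        simp only [hsym (e _) (e _), ← zpow_add]
    _ = coboundary α x y := by
        simp only [hα', map_mul, map_prod, Pi.mul_apply, prod_apply,
          coboundary_zpow_mul, coboundary_zpow_mul_sub_one_ediv_two]
        rfl
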